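/- arXiv:1806.09554 — 3 statements merged into one kernel-verified Lean document; each statement's English description precedes it below -/
import Mathlib

section
/- For every type x, the set of events Ev(x) of type x equals L(H_x), where H_x is the tensor product of the Hilbert spaces of all elementary types occurring in the expression of x. -/
open Matrix

/-- Types of higher-order quantum theory: elementary types are finite-dimensional
quantum systems (recorded by their dimension), and `arrow x y` is the type `x → y`. -/
inductive QT where
  | elem (n : ℕ)
  | arrow (x y : QT)

/-- The dimension of the Hilbert space `H_x`: the product of the dimensions of the
elementary types occurring in `x`. -/
def hdim : QT → ℕ
  | .elem n => n
  | .arrow x y => hdim x * hdim y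

/-- The space of generalized events of type `x`, defined recursively:
`Ev(A) = L(H_A)` for elementary `A`, and events of type `x → y` correspond (via the
Choi isomorphism) to linear maps from `Ev(x)` to `Ev(y)`. -/
noncomputable def EvM : QT → ModuleCat.{0} ℂ
  | .elem n => ModuleCat.of ℂ (Matrix (Fin n) (Fin n) ℂ)
  | .arrow x y => ModuleCat.of ℂ (↥(EvM x) →ₗ[ℂ] ↥(EvM y))

/-- Characterization of events: for every type `x`, the space of events of type `x`
is (linearly isomorphic to) the full operator space `L(H_x)` on the tensor product
Hilbert space of all elementary systems occurring in `x`. -/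
theorem ev_eq_full_operator_space (x : QT) :
    Nonempty (↥(EvM x) ≃ₗ[ℂ] Matrix (Fin (hdim x)) (Fin (hdim x)) ℂ) := by
  induction x with
  | elem n => exact ⟨LinearEquiv.refl ℂ _⟩
  | arrow x y ihx ihy =>
      obtain ⟨ex⟩ := ihx
      obtain ⟨ey⟩ := ihy
      set a := hdim x
      set b := hdim y
      have e1 : ↥(EvM (.arrow x y)) ≃ₗ[ℂ]
          (Matrix (Fin a) (Fin a) ℂ →ₗ[ℂ] Matrix (Fin b) (Fin b) ℂ) :=
        LinearEquiv.arrowCongr ex ey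
      have e2 : (Matrix (Fin a) (Fin a) ℂ →ₗ[ℂ] Matrix (Fin b) (Fin b) ℂ) ≃ₗ[ℂ]
          Matrix (Fin (a * b)) (Fin (a * b)) ℂ := by
        apply LinearEquiv.ofFinrankEq
        rw [Module.finrank_linearMap]
        simp [Module.finrank_matrix]
        ring
      exact ⟨e1.trans e2⟩
end

section
/- For the comb hierarchy over elementary types, n_E := (...((E_1 → E_2) → E_3)...) → E_n, a binary string b of appropriate length lies in the index set D_n (characterizing Δ_{n_E} = ⊕_{b ∈ D_n} L_b) if and only if b, read from the right, starts with an even number of 1s. Moreover λ_n = d_{E_n}^{-1} ∏_{i=1}^{(n−1)/2} d_{E_{2i−1}}^{-1} for n odd, and λ_n = ∏_{i=1}^{n/2} d_{E_{2i}}^{-1} for n even. -/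
/-!
Both parts are read off the recursions one step at a time. A string of length `n + 2` is
`w ++ [b]`: appending `0` is always allowed and resets the trailing run of `1`s, while
appending `1` is allowed exactly when `w` is neither all ones nor in `D_{n+1}`, i.e. (by
induction) when the trailing run of `w` is odd and shorter than `w`, which makes the new
run even. For `λ`, the recursion says `λ_{n+1} λ_n d_1 ⋯ d_{n+1} = 1` for every `n`, and
dividing two consecutive instances gives `λ_{n+2} = λ_n / d_{n+2}`.
-/

/-- The all-ones string of length `k`. -/
def allOnes (k : ℕ) : List Bool := List.replicate k true

/-- The length of the maximal run of `1`s at the right end of a string. -/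
def trailingOnes (l : List Bool) : ℕ := (l.reverse.takeWhile id).length

/-- The index set `D_n` of the comb hierarchy over elementary types
`n_E = (...((E_1 → E_2) → E_3)...) → E_n`, defined via the recursion
`D_* = {0}`, `D_{x→y} = W_x D_y ∪ D̄_x D_y^⊥` (here `y` elementary). -/
def Dchain : ℕ → Set (List Bool)
  | 0 => ∅
  | 1 => {[false]}
  | n + 2 =>
      {l | ∃ w : List Bool, w.length = n + 1 ∧ l = w ++ [false]} ∪
      {l | ∃ w : List Bool, w.length = n + 1 ∧ w ≠ allOnes (n + 1) ∧
        w ∉ Dchain (n + 1) ∧ l = w ++ [true]}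

/-- The normalization constant `λ_n` of the elementary comb `n_E`, for dimensions
`d 1, ..., d n`: `λ_1 = 1/d_1`, `λ_{n+1} = λ_{E_{n+1}} / (d_{1⋯n} λ_n)`. -/
noncomputable def lamChain (d : ℕ → ℕ) : ℕ → ℝ
  | 0 => 1
  | 1 => 1 / (d 1)
  | n + 2 =>
      (1 / (d (n + 2))) /
        ((∏ i ∈ Finset.range (n + 1), (d (i + 1) : ℝ)) * lamChain d (n + 1))

theorem trailingOnes_append_false (w : List Bool) : trailingOnes (w ++ [false]) = 0 := by
  simp [trailingOnes]

theorem trailingOnes_append_true (w : List Bool) :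
    trailingOnes (w ++ [true]) = trailingOnes w + 1 := by
  simp [trailingOnes]

theorem trailingOnes_le_length (l : List Bool) : trailingOnes l ≤ l.length := by
  simpa [trailingOnes] using (l.reverse.takeWhile_prefix id).length_le

theorem trailingOnes_eq_length_iff {l : List Bool} :
    trailingOnes l = l.length ↔ l = allOnes l.length := by
  rw [allOnes, List.eq_replicate_iff]
  have hpre := l.reverse.takeWhile_prefix id
  constructor
  · intro h
    have hall :=
      List.takeWhile_eq_self_iff.mp (hpre.eq_of_length (by simpa [trailingOnes] using h))
    exact ⟨rfl, fun b hb => hall b (List.mem_reverse.mpr hb)⟩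
  · rintro ⟨-, hall⟩
    have : l.reverse.takeWhile id = l.reverse :=
      List.takeWhile_eq_self_iff.mpr fun b hb => hall b (List.mem_reverse.mp hb)
    simp [trailingOnes, this]

theorem trailingOnes_lt_length_iff {l : List Bool} :
    trailingOnes l < l.length ↔ l ≠ allOnes l.length := by
  rw [(trailingOnes_le_length l).lt_iff_ne, Ne, trailingOnes_eq_length_iff]

theorem append_singleton_mem_Dchain_add_two {n : ℕ} {w : List Bool} {b : Bool} :
    w ++ [b] ∈ Dchain (n + 2) ↔
      w.length = n + 1 ∧ (b = true → w ≠ allOnes (n + 1) ∧ w ∉ Dchain (n + 1)) := by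
  cases b <;> simp [Dchain]

theorem mem_Dchain_iff : ∀ (n : ℕ) (l : List Bool),
    l ∈ Dchain n ↔ l.length = n ∧ Even (trailingOnes l) ∧ trailingOnes l < n
  | 0, l => by simp [Dchain]
  | 1, l => by
    rcases l.eq_nil_or_concat' with rfl | ⟨w, b, rfl⟩
    · simp [Dchain]
    · cases b <;> simp [Dchain, trailingOnes, List.append_eq_cons_iff]
  | n + 2, l => by
    rcases l.eq_nil_or_concat' with rfl | ⟨w, b, rfl⟩
    · simp [Dchain]
    · rw [append_singleton_mem_Dchain_add_two, mem_Dchain_iff (n + 1)]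
      cases b
      · simp [trailingOnes_append_false]
      · simp only [trailingOnes_append_true, List.length_append, List.length_singleton]
        by_cases hw : w.length = n + 1
        · rw [← hw, ← trailingOnes_lt_length_iff]
          simp only [hw, Nat.even_add_one, not_and, not_lt]
          grind
        · simp [hw]

section lamChain

variable {d : ℕ → ℕ}

theorem lamChain_succ_mul_mul_prod (hd : ∀ i, d (i + 1) ≠ 0) (n : ℕ) :
    lamChain d (n + 1) * lamChain d n * ∏ i ∈ Finset.range (n + 1), (d (i + 1) : ℝ) = 1 := by
  induction n with
  | zero => simp [lamChain, hd 0]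
  | succ n ih =>
    have hlam : lamChain d (n + 1) ≠ 0 := by
      rintro h; simp [h] at ih
    have hprod : ∏ i ∈ Finset.range (n + 1), (d (i + 1) : ℝ) ≠ 0 :=
      Finset.prod_ne_zero_iff.mpr fun i _ => Nat.cast_ne_zero.mpr (hd i)
    rw [lamChain, Finset.prod_range_succ (fun i => (d (i + 1) : ℝ)) (n + 1)]
    have hd_succ := hd (n + 1)
    field_simp

theorem lamChain_add_two (hd : ∀ i, d (i + 1) ≠ 0) (n : ℕ) :
    lamChain d (n + 2) = lamChain d n / d (n + 2) := by
  have h : (∏ i ∈ Finset.range (n + 1), (d (i + 1) : ℝ)) * lamChain d (n + 1) =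
      (lamChain d n)⁻¹ :=
    eq_inv_of_mul_eq_one_left (by linear_combination lamChain_succ_mul_mul_prod hd n)
  rw [lamChain, h, div_inv_eq_mul]
  ring

theorem lamChain_two_mul (hd : ∀ i, d (i + 1) ≠ 0) (m : ℕ) :
    lamChain d (2 * m) = ∏ i ∈ Finset.range m, (d (2 * i + 2) : ℝ)⁻¹ := by
  induction m with
  | zero => simp [lamChain]
  | succ m ih =>
    rw [Nat.mul_succ, Finset.prod_range_succ, ← ih, ← div_eq_mul_inv, ← lamChain_add_two hd]

theorem lamChain_two_mul_add_one (hd : ∀ i, d (i + 1) ≠ 0) (m : ℕ) :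
    lamChain d (2 * m + 1) =
      (d (2 * m + 1) : ℝ)⁻¹ * ∏ i ∈ Finset.range m, (d (2 * i + 1) : ℝ)⁻¹ := by
  induction m with
  | zero => simp [lamChain]
  | succ m ih =>
    rw [show 2 * (m + 1) + 1 = 2 * m + 1 + 2 by ring, lamChain_add_two hd, ih,
      Finset.prod_range_succ]
    ring

end lamChain

theorem chain_comb_characterization_general (d : ℕ → ℕ) (hd : ∀ i, 0 < d i)
    (n : ℕ) :
    (∀ l : List Bool, l ∈ Dchain n ↔
      (l.length = n ∧ Even (trailingOnes l) ∧ trailingOnes l < n)) ∧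
    (Odd n → lamChain d n =
      (d n : ℝ)⁻¹ * ∏ i ∈ Finset.range ((n - 1) / 2), (d (2 * i + 1) : ℝ)⁻¹) ∧
    (Even n → lamChain d n = ∏ i ∈ Finset.range (n / 2), (d (2 * i + 2) : ℝ)⁻¹) := by
  have hd' : ∀ i, d (i + 1) ≠ 0 := fun i => (hd (i + 1)).ne'
  refine ⟨mem_Dchain_iff n, ?_, ?_⟩
  · rintro ⟨m, rfl⟩
    rw [Nat.add_sub_cancel, Nat.mul_div_cancel_left m two_pos]
    exact lamChain_two_mul_add_one hd' m
  · rintro ⟨m, rfl⟩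
    rw [← two_mul, Nat.mul_div_cancel_left m two_pos]
    exact lamChain_two_mul hd' m

/-- Characterization of elementary combs: a binary string `b` lies in `D_n` iff,
read from the right, it starts with an even number of `1`s (i.e. the maximal
trailing run of `1`s has even length and is not the whole string); and the
normalization constant is `λ_n = d_n⁻¹ ∏ d_{2i-1}⁻¹` for `n` odd and
`λ_n = ∏ d_{2i}⁻¹` for `n` even. -/
theorem chain_comb_characterization (d : ℕ → ℕ) (hd : ∀ i, 0 < d i)
    (n : ℕ) (hn : 1 ≤ n) :
    (∀ l : List Bool, l ∈ Dchain n ↔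
      (l.length = n ∧ Even (trailingOnes l) ∧ trailingOnes l < n)) ∧
    (Odd n → lamChain d n =
      (d n : ℝ)⁻¹ * ∏ i ∈ Finset.range ((n - 1) / 2), (d (2 * i + 1) : ℝ)⁻¹) ∧
    (Even n → lamChain d n = ∏ i ∈ Finset.range (n / 2), (d (2 * i + 2) : ℝ)⁻¹) :=
  chain_comb_characterization_general d hd n
end

section
/- The n-comb type over maps is equivalent to the 2n-comb type over elementary systems: (...((A_1 → B_1) → (A_2 → B_2))...) → (A_n → B_n) ≡ (...((A_n → A_{n−1}) → ... → A_1) → B_1) ... ) → B_n. Concretely, under the permutation of tensor factors sending (A_1 B_1 ... A_n B_n) to (A_n ... A_1 B_1 ... B_n), the index sets D and normalization constants λ of the two types coincide. -/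
/-- The index set `D_n` of the comb hierarchy over maps,
`(...((A_1 → B_1) → (A_2 → B_2))...) → (A_n → B_n)`; strings are ordered as
`(A_1 B_1 A_2 B_2 ... A_n B_n)`. -/
def Dcomb : ℕ → Set (List Bool)
  | 0 => ∅
  | 1 => {[false, false], [true, false]}
  | n + 2 =>
      {l | ∃ w v : List Bool, w.length = 2 * (n + 1) ∧
        v ∈ ({[false, false], [true, false]} : Set (List Bool)) ∧ l = w ++ v} ∪
      {l | ∃ w v : List Bool, w.length = 2 * (n + 1) ∧ w ≠ allOnes (2 * (n + 1)) ∧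
        w ∉ Dcomb (n + 1) ∧
        v ∈ ({[false, true], [true, true]} : Set (List Bool)) ∧ l = w ++ v}

/-- Split a string `(a_1 b_1 a_2 b_2 ...)` into `((a_1 a_2 ...), (b_1 b_2 ...))`. -/
def deinter : List Bool → List Bool × List Bool
  | [] => ([], [])
  | [a] => ([a], [])
  | a :: b :: r => ((a :: (deinter r).1), (b :: (deinter r).2))

/-- The permutation sending `(A_1 B_1 ... A_n B_n)` to `(A_n ... A_1 B_1 ... B_n)`. -/
def permComb (l : List Bool) : List Bool :=
  (deinter l).1.reverse ++ (deinter l).2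

/-- The normalization constant of the comb `(...((A_1→B_1)→(A_2→B_2))...)→(A_n→B_n)`
with dimensions `a i` for `A_i` and `b i` for `B_i`. -/
noncomputable def lamComb (a b : ℕ → ℕ) : ℕ → ℝ
  | 0 => 1
  | 1 => 1 / (b 1)
  | n + 2 =>
      (1 / (b (n + 2))) /
        ((∏ i ∈ Finset.range (n + 1), ((a (i + 1) : ℝ) * (b (i + 1) : ℝ))) *
          lamComb a b (n + 1))


/-! ### Auxiliary definitions and lemmas -/

/-- Number of leading `true`s. -/
def lead : List Bool → ℕ
  | [] => 0
  | false :: _ => 0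
  | true :: r => lead r + 1

/-- Number of trailing `true`s. -/
def trail (l : List Bool) : ℕ := lead l.reverse

lemma lead_append_of_mem {u : List Bool} (h : false ∈ u) (v : List Bool) :
    lead (u ++ v) = lead u := by
  induction u with
  | nil => simp at h
  | cons x r ih =>
    cases x with
    | false => simp [lead]
    | true =>
      have hr : false ∈ r := by simpa using h
      simp [lead, ih hr]

lemma lead_replicate (k : ℕ) (v : List Bool) :
    lead (List.replicate k true ++ v) = k + lead v := by
  induction k with
  | zero => simp
  | succ p ih =>
    rw [List.replicate_succ, List.cons_append,
      show lead (true :: (List.replicate p true ++ v)) =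
        lead (List.replicate p true ++ v) + 1 from rfl, ih]
    omega

lemma trail_concat_false (x : List Bool) : trail (x ++ [false]) = 0 := by
  simp [trail, lead]

lemma trail_concat_true (x : List Bool) : trail (x ++ [true]) = trail x + 1 := by
  simp [trail, lead]

lemma trail_cons_of_mem {x : List Bool} (h : false ∈ x) (a : Bool) :
    trail (a :: x) = trail x := by
  have : false ∈ x.reverse := by simpa using h
  simp [trail, lead_append_of_mem this]

lemma trail_false_cons_allOnes (k : ℕ) : trail (false :: allOnes k) = k := by
  simp [trail, allOnes, lead_replicate, lead]

lemma ne_allOnes_iff {l : List Bool} {k : ℕ} (hl : l.length = k) :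
    l ≠ allOnes k ↔ false ∈ l := by
  constructor
  · intro h
    by_contra hf
    apply h
    rw [allOnes, List.eq_replicate_iff]
    exact ⟨hl, fun b hb => by cases b <;> simp_all⟩
  · intro hf h
    rw [h, allOnes] at hf
    simp at hf

lemma allOnes_concat (k : ℕ) : allOnes (k + 1) = allOnes k ++ [true] := by
  simp [allOnes, List.replicate_succ']

lemma allOnes_cons (k : ℕ) : allOnes (k + 1) = true :: allOnes k := rfl

lemma concat_eq_concat {w w' : List Bool} {x y : Bool} :
    w ++ [x] = w' ++ [y] ↔ w = w' ∧ x = y := by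
  constructor
  · intro h
    have := List.append_inj' h (by simp)
    simpa using this
  · rintro ⟨rfl, rfl⟩; rfl

lemma pair_eq_append {w w' : List Bool} {x y c d : Bool}
    (hlen : w.length = w'.length) :
    w ++ [x, y] = w' ++ [c, d] ↔ w = w' ∧ x = c ∧ y = d := by
  constructor
  · intro h
    have := List.append_inj h hlen
    simp_all
  · rintro ⟨rfl, rfl, rfl⟩; rfl

/-! ### Characterization of `Dchain` -/

lemma dchain_char : ∀ n (l : List Bool), l.length = n + 1 →
    (l ∈ Dchain (n + 1) ↔ Even (trail l) ∧ l ≠ allOnes (n + 1)) := by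
  intro n
  induction n with
  | zero =>
    intro l hl
    match l, hl with
    | [x], _ =>
      cases x <;> simp [Dchain, allOnes, trail, lead, List.replicate]
  | succ m ih =>
    intro l hl
    induction l using List.reverseRecOn with
    | nil => simp at hl
    | append_singleton w x _ =>
      have hw : w.length = m + 1 := by simpa using hl
      rw [show m + 1 + 1 = m + 2 from rfl, Dchain]
      simp only [Set.mem_union, Set.mem_setOf_eq]
      have h1 : (∃ w' : List Bool, w'.length = m + 1 ∧ w ++ [x] = w' ++ [false]) ↔ x = false := by
        constructor
        · rintro ⟨w', -, h⟩; exact (concat_eq_concat.mp h).2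
        · rintro rfl; exact ⟨w, hw, rfl⟩
      have h2 : (∃ w' : List Bool, w'.length = m + 1 ∧ w' ≠ allOnes (m + 1) ∧
          w' ∉ Dchain (m + 1) ∧ w ++ [x] = w' ++ [true]) ↔
          (x = true ∧ w ≠ allOnes (m + 1) ∧ w ∉ Dchain (m + 1)) := by
        constructor
        · rintro ⟨w', h', hne, hnd, h⟩
          obtain ⟨rfl, rfl⟩ := concat_eq_concat.mp h
          exact ⟨rfl, hne, hnd⟩
        · rintro ⟨rfl, hne, hnd⟩; exact ⟨w, hw, hne, hnd, rfl⟩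
      rw [h1, h2]
      cases x with
      | false =>
        simp only [trail_concat_false]
        constructor
        · intro _
          refine ⟨Even.zero, fun h => ?_⟩
          rw [allOnes_concat] at h
          simpa using (concat_eq_concat.mp h).2
        · intro _; simp
      | true =>
        rw [trail_concat_true, Nat.even_add_one]
        have h4 : (w ++ [true] ≠ allOnes (m + 1 + 1)) ↔ w ≠ allOnes (m + 1) := by
          rw [allOnes_concat, Ne, concat_eq_concat]
          simp
        rw [h4, ih w hw]
        tauto

/-! ### Properties of `deinter` and `permComb` -/

lemma deinter_append_pair (a b : Bool) : ∀ (w : List Bool), w.length % 2 = 0 →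
    deinter (w ++ [a, b]) = ((deinter w).1 ++ [a], (deinter w).2 ++ [b])
  | [], _ => by simp [deinter]
  | [x], h => by simp at h
  | x :: y :: r, h => by
      have hr : r.length % 2 = 0 := by simp at h; omega
      simp [deinter, deinter_append_pair a b r hr]

lemma deinter_perm : ∀ (l : List Bool), List.Perm ((deinter l).1 ++ (deinter l).2) l
  | [] => by simp [deinter]
  | [a] => by simp [deinter]
  | a :: b :: r => by
      have ih := deinter_perm r
      simp only [deinter, List.cons_append]
      refine List.Perm.cons a ?_
      exact List.perm_middle.trans (ih.cons b)

lemma permComb_perm (l : List Bool) : List.Perm (permComb l) l := by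
  have h1 : List.Perm (permComb l) ((deinter l).1 ++ (deinter l).2) :=
    ((deinter l).1.reverse_perm).append_right _
  exact h1.trans (deinter_perm l)

lemma permComb_length (l : List Bool) : (permComb l).length = l.length :=
  (permComb_perm l).length_eq

lemma permComb_append_pair (w : List Bool) (h : w.length % 2 = 0) (a b : Bool) :
    permComb (w ++ [a, b]) = (a :: permComb w) ++ [b] := by
  simp [permComb, deinter_append_pair a b w h]

lemma false_mem_permComb {l : List Bool} : false ∈ permComb l ↔ false ∈ l :=
  (permComb_perm l).mem_iff

/-! ### Characterization of `Dcomb` -/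

lemma dcomb_char : ∀ n (l : List Bool), l.length = 2 * (n + 1) →
    (l ∈ Dcomb (n + 1) ↔
      (Even (trail (permComb l)) ∧ permComb l ≠ allOnes (2 * (n + 1)))) := by
  intro n
  induction n with
  | zero =>
    intro l hl
    match l, hl with
    | [x, y], _ =>
      have : permComb [x, y] = [x, y] := rfl
      rw [this]
      cases x <;> cases y <;>
        simp [Dcomb, allOnes, trail, lead, List.replicate, Set.mem_insert_iff]
  | succ m ih =>
    intro l hl
    induction l using List.reverseRecOn with
    | nil => simp at hl
    | append_singleton l' y _ =>
    induction l' using List.reverseRecOn with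
    | nil => simp at hl; omega
    | append_singleton w x _ =>
      have hw : w.length = 2 * (m + 1) := by simp at hl; omega
      have hwe : w.length % 2 = 0 := by omega
      have hx : w ++ [x] ++ [y] = w ++ [x, y] := by simp
      rw [hx] at hl ⊢
      rw [permComb_append_pair w hwe x y]
      have hpwlen : (permComb w).length = 2 * (m + 1) := by rw [permComb_length, hw]
      rw [show m + 1 + 1 = m + 2 from rfl, Dcomb]
      simp only [Set.mem_union, Set.mem_setOf_eq]
      have h1 : (∃ w' v : List Bool, w'.length = 2 * (m + 1) ∧
          v ∈ ({[false, false], [true, false]} : Set (List Bool)) ∧ w ++ [x, y] = w' ++ v) ↔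
          y = false := by
        constructor
        · rintro ⟨w', v, hw', hv, h⟩
          simp only [Set.mem_insert_iff, Set.mem_singleton_iff] at hv
          rcases hv with rfl | rfl <;>
            · obtain ⟨-, -, rfl⟩ := (pair_eq_append (by omega)).mp h
              rfl
        · rintro rfl
          exact ⟨w, [x, false], hw, by cases x <;> simp, rfl⟩
      have h2 : (∃ w' v : List Bool, w'.length = 2 * (m + 1) ∧ w' ≠ allOnes (2 * (m + 1)) ∧
          w' ∉ Dcomb (m + 1) ∧
          v ∈ ({[false, true], [true, true]} : Set (List Bool)) ∧ w ++ [x, y] = w' ++ v) ↔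
          (y = true ∧ w ≠ allOnes (2 * (m + 1)) ∧ w ∉ Dcomb (m + 1)) := by
        constructor
        · rintro ⟨w', v, hw', hne, hnd, hv, h⟩
          simp only [Set.mem_insert_iff, Set.mem_singleton_iff] at hv
          rcases hv with rfl | rfl <;>
            · obtain ⟨rfl, -, rfl⟩ := (pair_eq_append (by omega)).mp h
              exact ⟨rfl, hne, hnd⟩
        · rintro ⟨rfl, hne, hnd⟩
          exact ⟨w, [x, true], hw, hne, hnd, by cases x <;> simp, rfl⟩
      rw [h1, h2, ih w hw]
      have hA' : w ≠ allOnes (2 * (m + 1)) ↔ permComb w ≠ allOnes (2 * (m + 1)) := by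
        rw [ne_allOnes_iff hw, ne_allOnes_iff hpwlen, false_mem_permComb]
      have hA : w = allOnes (2 * (m + 1)) ↔ permComb w = allOnes (2 * (m + 1)) :=
        not_iff_not.mp hA'
      cases y with
      | false =>
        simp only [trail_concat_false]
        constructor
        · intro _
          refine ⟨Even.zero, fun h => ?_⟩
          rw [show 2 * (m + 2) = 2 * (m + 1) + 1 + 1 from by ring, allOnes_concat] at h
          simpa using (concat_eq_concat.mp h).2
        · intro _; simp
      | true =>
        rw [trail_concat_true, Nat.even_add_one]
        have h4 : ((x :: permComb w) ++ [true] ≠ allOnes (2 * (m + 2))) ↔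
            x :: permComb w ≠ allOnes (2 * (m + 1) + 1) := by
          rw [show 2 * (m + 2) = 2 * (m + 1) + 1 + 1 from by ring, allOnes_concat,
            Ne, concat_eq_concat]
          simp
        rw [h4]
        by_cases hpw : permComb w = allOnes (2 * (m + 1))
        · rw [hpw]
          have hLfalse : ¬ (true = true ∧ w ≠ allOnes (2 * (m + 1)) ∧
              ¬(Even (trail (permComb w)) ∧ permComb w ≠ allOnes (2 * (m + 1)))) := by
            rintro ⟨-, hne, -⟩
            exact hne (hA.mpr hpw)
          cases x with
          | false =>
            rw [trail_false_cons_allOnes]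
            simp only [hLfalse]
            constructor
            · rintro (h | h) <;> simp_all
            · rintro ⟨h, -⟩
              exact absurd (by exact ⟨m + 1, by ring⟩) h
          | true =>
            have : true :: allOnes (2 * (m + 1)) = allOnes (2 * (m + 1) + 1) :=
              (allOnes_cons _).symm
            rw [this]
            simp only [hLfalse]
            constructor
            · rintro (h | h) <;> simp_all
            · rintro ⟨-, h⟩
              exact absurd rfl h
        · have hf : false ∈ permComb w := (ne_allOnes_iff hpwlen).mp hpw
          rw [trail_cons_of_mem hf]
          have h5 : x :: permComb w ≠ allOnes (2 * (m + 1) + 1) := by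
            rw [ne_allOnes_iff (by simp [hpwlen])]
            simp [hf]
          have h6 : w ≠ allOnes (2 * (m + 1)) := fun h => hpw (hA.mp h)
          constructor
          · rintro (h | ⟨-, -, hnd⟩)
            · simp at h
            · exact ⟨fun he => hnd ⟨he, hpw⟩, h5⟩
          · rintro ⟨hne, -⟩
            exact Or.inr ⟨rfl, h6, fun h => hne h.1⟩

/-! ### Closed forms of the normalization constants -/

/-- `Pcl f m = ∏_{1 ≤ i ≤ m, i ≡ m mod 2} f i`. -/
noncomputable def Pcl (f : ℕ → ℝ) (m : ℕ) : ℝ :=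
  ∏ k ∈ Finset.range ((m + 1) / 2), f (m - 2 * k)

lemma Pcl_succ_succ (f : ℕ → ℝ) (m : ℕ) : Pcl f (m + 2) = f (m + 2) * Pcl f m := by
  rw [Pcl, Pcl, show (m + 2 + 1) / 2 = (m + 1) / 2 + 1 from by omega,
    Finset.prod_range_succ']
  rw [mul_comm]
  congr 1
  apply Finset.prod_congr rfl
  intro k hk
  congr 1
  omega

lemma Pcl_mul (f : ℕ → ℝ) : ∀ m, Pcl f m * Pcl f (m + 1) =
    ∏ i ∈ Finset.range (m + 1), f (i + 1) := by
  intro m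
  induction m with
  | zero => simp [Pcl]
  | succ p ih =>
    rw [Pcl_succ_succ, Finset.prod_range_succ, ← ih]
    ring

lemma Pcl_pos {f : ℕ → ℝ} (hf : ∀ i, 0 < f i) (m : ℕ) : 0 < Pcl f m :=
  Finset.prod_pos fun _ _ => hf _

lemma lamChain_closed (d : ℕ → ℕ) (hd : ∀ i, 0 < d i) :
    ∀ m, lamChain d (m + 1) = (Pcl (fun i => (d i : ℝ)) (m + 1))⁻¹ := by
  have hdr : ∀ i, (0:ℝ) < (d i : ℝ) := fun i => by exact_mod_cast hd i
  intro m
  induction m with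
  | zero =>
    rw [lamChain]
    simp [Pcl]
  | succ p ih =>
    rw [show p + 1 + 1 = p + 2 from rfl, lamChain, ih]
    have hP : ∏ i ∈ Finset.range (p + 1), (d (i + 1) : ℝ) =
        Pcl (fun i => (d i : ℝ)) p * Pcl (fun i => (d i : ℝ)) (p + 1) :=
      (Pcl_mul (fun i => (d i : ℝ)) p).symm
    rw [hP, Pcl_succ_succ]
    have h1 := Pcl_pos (f := fun i => (d i : ℝ)) hdr p
    have h2 := Pcl_pos (f := fun i => (d i : ℝ)) hdr (p + 1)
    have h3 := hdr (p + 2)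
    field_simp

lemma lamComb_closed (a b : ℕ → ℕ) (ha : ∀ i, 0 < a i) (hb : ∀ i, 0 < b i) :
    ∀ m, lamComb a b (m + 1) =
      (Pcl (fun i => (b i : ℝ)) (m + 1) * Pcl (fun i => (a i : ℝ)) m)⁻¹ := by
  have har : ∀ i, (0:ℝ) < (a i : ℝ) := fun i => by exact_mod_cast ha i
  have hbr : ∀ i, (0:ℝ) < (b i : ℝ) := fun i => by exact_mod_cast hb i
  intro m
  induction m with
  | zero =>
    rw [lamComb]
    simp [Pcl]
  | succ p ih =>
    rw [show p + 1 + 1 = p + 2 from rfl, lamComb, ih]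
    have hP : ∏ i ∈ Finset.range (p + 1), ((a (i + 1) : ℝ) * (b (i + 1) : ℝ)) =
        (Pcl (fun i => (a i : ℝ)) p * Pcl (fun i => (a i : ℝ)) (p + 1)) *
        (Pcl (fun i => (b i : ℝ)) p * Pcl (fun i => (b i : ℝ)) (p + 1)) := by
      rw [Finset.prod_mul_distrib, Pcl_mul, Pcl_mul]
    rw [hP, Pcl_succ_succ (fun i => (b i : ℝ)) p]
    have h1 := Pcl_pos (f := fun i => (a i : ℝ)) har p
    have h2 := Pcl_pos (f := fun i => (a i : ℝ)) har (p + 1)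
    have h3 := Pcl_pos (f := fun i => (b i : ℝ)) hbr p
    have h4 := Pcl_pos (f := fun i => (b i : ℝ)) hbr (p + 1)
    have h5 := hbr (p + 2)
    field_simp

/-- Equivalence between the `n`-comb over maps and the `2n`-comb over elementary
systems: under the permutation sending `(A_1 B_1 ... A_n B_n)` to
`(A_n ... A_1 B_1 ... B_n)`, the index sets `D` coincide, and the normalization
constants `λ` of the two types coincide. -/
theorem comb_equiv_chain (a b : ℕ → ℕ) (ha : ∀ i, 0 < a i) (hb : ∀ i, 0 < b i)
    (n : ℕ) (hn : 1 ≤ n) :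
    (∀ l : List Bool, l.length = 2 * n →
      (l ∈ Dcomb n ↔ permComb l ∈ Dchain (2 * n))) ∧
    lamComb a b n =
      lamChain (fun i => if i ≤ n then a (n + 1 - i) else b (i - n)) (2 * n) := by
  obtain ⟨m, rfl⟩ : ∃ m, n = m + 1 := ⟨n - 1, by omega⟩
  constructor
  · intro l hl
    have hpl : (permComb l).length = 2 * m + 1 + 1 := by
      rw [permComb_length, hl]; ring
    rw [dcomb_char m l hl, show 2 * (m + 1) = 2 * m + 1 + 1 from by ring,
      dchain_char (2 * m + 1) (permComb l) hpl]
  · set d : ℕ → ℕ := fun i => if i ≤ m + 1 then a (m + 1 + 1 - i) else b (i - (m + 1)) with hd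
    have hdpos : ∀ i, 0 < d i := by
      intro i
      rw [hd]
      dsimp only
      split_ifs
      · exact ha _
      · exact hb _
    rw [show 2 * (m + 1) = 2 * m + 1 + 1 from by ring,
      lamChain_closed d hdpos (2 * m + 1), lamComb_closed a b ha hb m]
    congr 1
    -- Pcl b (m+1) * Pcl a m = Pcl d (2m+2)
    have hhalf : (2 * m + 1 + 1 + 1) / 2 = (m + 2) / 2 + (m + 1) / 2 := by omega
    rw [Pcl, Pcl, Pcl, hhalf, Finset.prod_range_add]
    congr 1
    · apply Finset.prod_congr rfl
      intro k hk
      simp only [Finset.mem_range] at hk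
      have hcond : ¬ (2 * m + 1 + 1 - 2 * k ≤ m + 1) := by omega
      rw [hd]
      dsimp only
      rw [if_neg hcond, show 2 * m + 1 + 1 - 2 * k - (m + 1) = m + 1 - 2 * k from by omega]
    · rw [← Finset.prod_range_reflect]
      apply Finset.prod_congr rfl
      intro k hk
      simp only [Finset.mem_range] at hk
      have hcond : (2 * m + 1 + 1 - 2 * ((m + 2) / 2 + k) ≤ m + 1) := by omega
      rw [hd]
      dsimp only
      rw [if_pos hcond, show m + 1 + 1 - (2 * m + 1 + 1 - 2 * ((m + 2) / 2 + k)) =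
        m - 2 * ((m + 1) / 2 - 1 - k) from by omega]
end
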